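/- Let λ₁,...,λₙ > 0 and let Γ be a lattice of the oscillator group Osc_n(λ₁,...,λₙ). Suppose t₀ > 0 generates the additive subgroup T(Γ) = { t ∈ ℝ : (z, u, t) ∈ Γ for some z ∈ ℝ, u ∈ ℝ^{2n} } of ℝ, and suppose exp(t₀ N_λ) = Id (the case K₀ = 1). Then Γ contains an element of the form (z, 0, t) with z ≠ 0 and t ≠ 0. -/

import Mathlib

open Real

noncomputable section

/-- rotation by angle `θ` acting on `ℝ × ℝ` -/
def rot (θ : ℝ) (p : ℝ × ℝ) : ℝ × ℝ :=
  (Real.cos θ * p.1 - Real.sin θ * p.2, Real.sin θ * p.1 + Real.cos θ * p.2)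

/-- the matrix `[[0,1],[-1,0]]` acting on `ℝ × ℝ` -/
def Jpair (p : ℝ × ℝ) : ℝ × ℝ := (p.2, -p.1)

/-- euclidean inner product on `ℝ × ℝ` -/
def dot2 (p q : ℝ × ℝ) : ℝ := p.1 * q.1 + p.2 * q.2

/-- underlying set `ℝ × ℝ^{2n} × ℝ` of the oscillator group, where the middle
factor `ℝ^{2n}` is recorded as `n` pairs `(x_i, y_i)`. -/
abbrev OscG (n : ℕ) := ℝ × (Fin n → ℝ × ℝ) × ℝ

/-- multiplication of the oscillator group `Osc_n(λ₁,…,λₙ)`: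
`(z₁,v₁,t₁)·(z₂,v₂,t₂) = (z₁+z₂+½ v₁ᵀ J R(t₁) v₂, v₁ + R(t₁)v₂, t₁+t₂)`,
where `R(t)` rotates the `i`-th pair by the angle `λ_i t`. -/
def oscMul {n : ℕ} (lam : Fin n → ℝ) (g h : OscG n) : OscG n :=
  (g.1 + h.1 + (1/2) * ∑ i, dot2 (g.2.1 i) (Jpair (rot (lam i * g.2.2) (h.2.1 i))),
   fun i => g.2.1 i + rot (lam i * g.2.2) (h.2.1 i),
   g.2.2 + h.2.2)

/-- identity element of the oscillator group -/
def oscOne (n : ℕ) : OscG n := (0, fun _ => (0, 0), 0)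

/-- inverse in the oscillator group: `(z,v,t)⁻¹ = (-z, -R(-t)v, -t)` -/
def oscInv {n : ℕ} (lam : Fin n → ℝ) (g : OscG n) : OscG n :=
  (-g.1, fun i => -(rot (lam i * (-g.2.2)) (g.2.1 i)), -g.2.2)

/-- `Γ` is a lattice of the oscillator group: a discrete subgroup with compact
quotient (the quotient by the right multiplication action of `Γ`). -/
structure IsLattice {n : ℕ} (lam : Fin n → ℝ) (Γ : Set (OscG n)) : Prop where
  one_mem : oscOne n ∈ Γ
  mul_mem : ∀ g ∈ Γ, ∀ h ∈ Γ, oscMul lam g h ∈ Γ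
  inv_mem : ∀ g ∈ Γ, oscInv lam g ∈ Γ
  discrete : DiscreteTopology Γ
  cocompact : CompactSpace (Quot (fun g h : OscG n => ∃ γ ∈ Γ, h = oscMul lam g γ))

/-- `Q(X) = 2ad + Σ_k (b_k² + c_k²)/λ_k` for `X = (d,(b₁,c₁,…,bₙ,cₙ),a)` -/
def Qform {n : ℕ} (lam : Fin n → ℝ) (d a : ℝ) (b c : Fin n → ℝ) : ℝ :=
  2 * a * d + ∑ k, (b k ^ 2 + c k ^ 2) / lam k

/-- the geodesic through the identity with initial velocity
`X = (d,(b₁,c₁,…,bₙ,cₙ),a)` for the bi-invariant Lorentzian metric on the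
oscillator group. -/
def geo {n : ℕ} (lam : Fin n → ℝ) (d : ℝ) (b c : Fin n → ℝ) (a : ℝ) (s : ℝ) : OscG n :=
  if a = 0 then (d * s, fun j => (b j * s, c j * s), 0)
  else
    ((d + (1/(2*a)) * ∑ k, (b k ^ 2 + c k ^ 2) / lam k) * s
        - (1/(2*a^2)) * ∑ k, ((b k ^ 2 + c k ^ 2) / (lam k)^2) * Real.sin (lam k * a * s),
     fun j => ((1/(a * lam j)) * (b j * Real.sin (lam j * a * s)
                  + c j * Real.cos (lam j * a * s) - c j),
               (1/(a * lam j)) * (-(b j) * Real.cos (lam j * a * s)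
                  + c j * Real.sin (lam j * a * s) + b j)),
     a * s)

/-! Every time coordinate in `Γ` is a multiple of `t₀` and `R(t₀) = Id`, so the rotations `R(t)`
are trivial along `Γ`: there `Γ` multiplies as the Heisenberg group `ℝ × ℝ^{2n}` for the form
`ω(v, w) = vᵀ J w`, with times adding. Commutators of `Γ` are then the central elements
`(ω(v, w), 0, 0)`, `v, w ∈ V`, the projection of `Γ` to `ℝ^{2n}`. By cocompactness `V` comes within a
fixed distance of every point, so by nondegeneracy of `ω` a very short nonzero `v ∈ V` would give
a nonzero central element of `Γ` arbitrarily close to the identity: `V` is uniformly discrete.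
Cocompactness also yields `γ_k ∈ Γ` whose `z`- and `t`-coordinates lie within `R` of `2Rk` while
their `v`-coordinates stay bounded; two of them then share their `v`-coordinate, and
`γ_k γ_l⁻¹ = (z_k - z_l, 0, t_k - t_l)`. -/

namespace Osc

variable {n : ℕ}

lemma rot_zero (p : ℝ × ℝ) : rot 0 p = p := by
  simp [rot]

lemma rot_add (a b : ℝ) (p : ℝ × ℝ) : rot (a + b) p = rot a (rot b p) := by
  simp only [rot, Real.cos_add, Real.sin_add, Prod.mk.injEq]
  constructor <;> ring

lemma rot_neg_add_cancel (a : ℝ) (p : ℝ × ℝ) : rot (-a) (rot a p) = p := by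
  rw [← rot_add, neg_add_cancel, rot_zero]

lemma rot_map_add (θ : ℝ) (p q : ℝ × ℝ) : rot θ (p + q) = rot θ p + rot θ q := by
  simp only [rot, Prod.fst_add, Prod.snd_add, Prod.mk_add_mk, Prod.mk.injEq]
  constructor <;> ring

lemma rot_map_neg (θ : ℝ) (p : ℝ × ℝ) : rot θ (-p) = -rot θ p := by
  simp only [rot, Prod.fst_neg, Prod.snd_neg, Prod.neg_mk, Prod.mk.injEq]
  constructor <;> ring

lemma rot_map_zero (θ : ℝ) : rot θ 0 = 0 := by
  simp [rot]

lemma rot_intCast_mul_eq_self {θ : ℝ} (h : ∀ p, rot θ p = p) (m : ℤ) (p : ℝ × ℝ) :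
    rot (m * θ) p = p := by
  induction m using Int.induction_on generalizing p with
  | zero => simp [rot_zero]
  | succ k ih => rw [Int.cast_add, Int.cast_one, add_one_mul, rot_add, h, ih]
  | pred k ih =>
    rw [Int.cast_sub, Int.cast_one, sub_one_mul, sub_eq_add_neg, rot_add, ih]
    conv_lhs => rw [← h p, rot_neg_add_cancel]

lemma norm_rot_le (θ : ℝ) (p : ℝ × ℝ) : ‖rot θ p‖ ≤ 2 * ‖p‖ := by
  have h₁ : |p.1| ≤ ‖p‖ := norm_fst_le p
  have h₂ : |p.2| ≤ ‖p‖ := norm_snd_le p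
  have bound : ∀ a b x y : ℝ, |a| ≤ 1 → |b| ≤ 1 → |x| ≤ ‖p‖ → |y| ≤ ‖p‖ →
      ‖a * x + b * y‖ ≤ 2 * ‖p‖ := fun a b x y ha hb hx hy =>
    calc ‖a * x + b * y‖ ≤ |a| * |x| + |b| * |y| := by
          rw [Real.norm_eq_abs, ← abs_mul, ← abs_mul]; exact abs_add_le _ _
      _ ≤ 1 * ‖p‖ + 1 * ‖p‖ := by gcongr
      _ = 2 * ‖p‖ := by ring
  rw [Prod.norm_def]
  refine max_le ?_ (bound _ _ _ _ (Real.abs_sin_le_one θ) (Real.abs_cos_le_one θ) h₁ h₂)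
  have h := bound _ _ _ _ (Real.abs_cos_le_one θ) (by rw [abs_neg]; exact Real.abs_sin_le_one θ)
    h₁ h₂
  rwa [neg_mul, ← sub_eq_add_neg] at h

lemma dot2_Jpair (p q : ℝ × ℝ) : dot2 p (Jpair q) = p.1 * q.2 - p.2 * q.1 := by
  simp only [dot2, Jpair]; ring

lemma dot2_Jpair_rot (θ : ℝ) (p q : ℝ × ℝ) :
    dot2 (rot θ p) (Jpair (rot θ q)) = dot2 p (Jpair q) := by
  simp only [rot, dot2_Jpair]
  linear_combination (p.1 * q.2 - p.2 * q.1) * Real.sin_sq_add_cos_sq θ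

/-- `rotV lam t` is the paper's `R(t) = exp(t N_λ)`. -/
def rotV (lam : Fin n → ℝ) (t : ℝ) (v : Fin n → ℝ × ℝ) : Fin n → ℝ × ℝ :=
  fun i => rot (lam i * t) (v i)

section rotV

variable (lam : Fin n → ℝ)

lemma rotV_zero (v : Fin n → ℝ × ℝ) : rotV lam 0 v = v := by
  funext i; simp [rotV, rot_zero]

lemma rotV_add (s t : ℝ) (v : Fin n → ℝ × ℝ) : rotV lam (s + t) v = rotV lam s (rotV lam t v) := by
  funext i; simp only [rotV, mul_add, rot_add]

lemma rotV_map_add (t : ℝ) (v w : Fin n → ℝ × ℝ) :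
    rotV lam t (v + w) = rotV lam t v + rotV lam t w := by
  funext i; simp only [rotV, Pi.add_apply, rot_map_add]

lemma rotV_map_neg (t : ℝ) (v : Fin n → ℝ × ℝ) : rotV lam t (-v) = -rotV lam t v := by
  funext i; simp only [rotV, Pi.neg_apply, rot_map_neg]

lemma rotV_map_zero (t : ℝ) : rotV lam t 0 = 0 := by
  funext i; simp only [rotV, Pi.zero_apply, rot_map_zero]

lemma rotV_neg_of_forall_eq {t : ℝ} (ht : ∀ v, rotV lam t v = v) (v : Fin n → ℝ × ℝ) :
    rotV lam (-t) v = v := by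
  conv_lhs => rw [← ht v, ← rotV_add, neg_add_cancel, rotV_zero]

lemma norm_rotV_le (t : ℝ) (v : Fin n → ℝ × ℝ) : ‖rotV lam t v‖ ≤ 2 * ‖v‖ :=
  (pi_norm_le_iff_of_nonneg (by positivity)).mpr fun i =>
    (norm_rot_le _ _).trans (by gcongr; exact norm_le_pi_norm v i)

end rotV

def sympl (v w : Fin n → ℝ × ℝ) : ℝ := ∑ i, dot2 (v i) (Jpair (w i))

lemma sympl_eq_sum (v w : Fin n → ℝ × ℝ) :
    sympl v w = ∑ i, ((v i).1 * (w i).2 - (v i).2 * (w i).1) := by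
  simp only [sympl, dot2_Jpair]

lemma sympl_self (v : Fin n → ℝ × ℝ) : sympl v v = 0 := by
  simp [sympl_eq_sum, mul_comm]

lemma sympl_comm (v w : Fin n → ℝ × ℝ) : sympl w v = -sympl v w := by
  simp only [sympl_eq_sum, ← Finset.sum_neg_distrib]
  exact Finset.sum_congr rfl fun _ _ => by ring

lemma sympl_add_left (u v w : Fin n → ℝ × ℝ) : sympl (u + v) w = sympl u w + sympl v w := by
  simp only [sympl_eq_sum, ← Finset.sum_add_distrib, Pi.add_apply, Prod.fst_add, Prod.snd_add]
  exact Finset.sum_congr rfl fun _ _ => by ring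

lemma sympl_add_right (u v w : Fin n → ℝ × ℝ) : sympl u (v + w) = sympl u v + sympl u w := by
  rw [sympl_comm, sympl_add_left, sympl_comm v, sympl_comm w, neg_add]

lemma sympl_neg_right (v w : Fin n → ℝ × ℝ) : sympl v (-w) = -sympl v w := by
  simp only [sympl_eq_sum, ← Finset.sum_neg_distrib, Pi.neg_apply, Prod.fst_neg, Prod.snd_neg]
  exact Finset.sum_congr rfl fun _ _ => by ring

lemma sympl_sub_right (u v w : Fin n → ℝ × ℝ) : sympl u (v - w) = sympl u v - sympl u w := by
  rw [sub_eq_add_neg, sympl_add_right, sympl_neg_right, ← sub_eq_add_neg]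

lemma sympl_zero_left (w : Fin n → ℝ × ℝ) : sympl 0 w = 0 := by
  simp [sympl_eq_sum]

lemma sympl_zero_right (v : Fin n → ℝ × ℝ) : sympl v 0 = 0 := by
  simp [sympl_eq_sum]

lemma sympl_rotV (lam : Fin n → ℝ) (t : ℝ) (v w : Fin n → ℝ × ℝ) :
    sympl (rotV lam t v) (rotV lam t w) = sympl v w := by
  simp only [sympl, rotV, dot2_Jpair_rot]

lemma oscMul_eq (lam : Fin n → ℝ) (g h : OscG n) :
    oscMul lam g h = (g.1 + h.1 + 1 / 2 * sympl g.2.1 (rotV lam g.2.2 h.2.1),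
      g.2.1 + rotV lam g.2.2 h.2.1, g.2.2 + h.2.2) := rfl

lemma oscInv_eq (lam : Fin n → ℝ) (g : OscG n) :
    oscInv lam g = (-g.1, -rotV lam (-g.2.2) g.2.1, -g.2.2) := rfl

variable (lam : Fin n → ℝ)

lemma oscMul_assoc (g h k : OscG n) :
    oscMul lam (oscMul lam g h) k = oscMul lam g (oscMul lam h k) := by
  obtain ⟨z₁, v₁, t₁⟩ := g
  obtain ⟨z₂, v₂, t₂⟩ := h
  obtain ⟨z₃, v₃, t₃⟩ := k
  simp only [oscMul_eq, rotV_add, rotV_map_add, sympl_add_left, sympl_add_right, sympl_rotV]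
  refine Prod.ext ?_ (Prod.ext ?_ ?_) <;> dsimp only <;> ring_nf

lemma oscOne_eq : oscOne n = (0, 0, 0) := rfl

lemma oscMul_oscOne (g : OscG n) : oscMul lam g (oscOne n) = g := by
  simp [oscMul_eq, oscOne_eq, rotV_map_zero, sympl_zero_right]

lemma oscMul_oscInv (g : OscG n) : oscMul lam g (oscInv lam g) = oscOne n := by
  simp [oscMul_eq, oscInv_eq, oscOne_eq, ← rotV_add, rotV_zero, rotV_map_neg, sympl_neg_right,
    sympl_self]

/-- The relation `h ∈ gΓ`, whose quotient `IsLattice` requires to be compact. -/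
def cosetRel (lam : Fin n → ℝ) (Γ : Set (OscG n)) (g h : OscG n) : Prop :=
  ∃ γ ∈ Γ, h = oscMul lam g γ

lemma continuous_oscMul_right (γ : OscG n) : Continuous fun g : OscG n => oscMul lam g γ := by
  simp only [oscMul, rot, dot2, Jpair]
  fun_prop

end Osc

namespace IsLattice

open Osc

variable {n : ℕ} {lam : Fin n → ℝ} {Γ : Set (OscG n)}

lemma exists_dist_lt_imp_eq_oscOne (hΓ : IsLattice lam Γ) :
    ∃ ε > 0, ∀ γ ∈ Γ, dist γ (oscOne n) < ε → γ = oscOne n := by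
  have h := (discreteTopology_subtype_iff.mp hΓ.discrete) _ hΓ.one_mem
  rw [Filter.inf_principal_eq_bot, Metric.mem_nhdsWithin_iff] at h
  obtain ⟨ε, hε, hball⟩ := h
  refine ⟨ε, hε, fun γ hγ hdist => ?_⟩
  by_contra hne
  exact hball ⟨hdist, hne⟩ hγ

lemma exists_norm_oscMul_lt_congr (hΓ : IsLattice lam Γ) {R : ℝ} {g h : OscG n}
    (hgh : Relation.EqvGen (cosetRel lam Γ) g h) :
    (∃ γ ∈ Γ, ‖oscMul lam g γ‖ < R) ↔ ∃ γ ∈ Γ, ‖oscMul lam h γ‖ < R := by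
  induction hgh with
  | rel g _ hgh =>
    obtain ⟨γ', hγ', rfl⟩ := hgh
    constructor
    · rintro ⟨γ, hγ, h⟩
      refine ⟨oscMul lam (oscInv lam γ') γ, hΓ.mul_mem _ (hΓ.inv_mem _ hγ') _ hγ, ?_⟩
      rwa [← oscMul_assoc, oscMul_assoc lam g, oscMul_oscInv, oscMul_oscOne]
    · rintro ⟨γ, hγ, h⟩
      exact ⟨oscMul lam γ' γ, hΓ.mul_mem _ hγ' _ hγ, by rwa [← oscMul_assoc]⟩
  | refl => exact Iff.rfl
  | symm _ _ _ ih => exact ih.symm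
  | trans _ _ _ _ _ ihgh ihhk => exact ihgh.trans ihhk

lemma exists_norm_oscMul_lt (hΓ : IsLattice lam Γ) :
    ∃ R : ℝ, ∀ g : OscG n, ∃ γ ∈ Γ, ‖oscMul lam g γ‖ < R := by
  let W : ℕ → Set (OscG n) := fun k => {g | ∃ γ ∈ Γ, ‖oscMul lam g γ‖ < k}
  let q : OscG n → Quot (cosetRel lam Γ) := Quot.mk _
  have hW_sat (k : ℕ) : q ⁻¹' (q '' W k) = W k :=
    Set.Subset.antisymm (fun _ ⟨_, hh, hhg⟩ =>
      (hΓ.exists_norm_oscMul_lt_congr (Quot.eqvGen_exact hhg)).mp hh)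
      (Set.subset_preimage_image _ _)
  have hW_open (k : ℕ) : IsOpen (q '' W k) := by
    rw [isOpen_coinduced, hW_sat]
    have hW : W k = ⋃ γ ∈ Γ, (oscMul lam · γ) ⁻¹' Metric.ball 0 k := by ext; simp [W]
    rw [hW]
    exact isOpen_biUnion fun γ _ => Metric.isOpen_ball.preimage (continuous_oscMul_right lam γ)
  have hW_cover : Set.univ ⊆ ⋃ k, q '' W k := by
    rintro x -
    obtain ⟨g, rfl⟩ := Quot.exists_rep x
    obtain ⟨k, hk⟩ := exists_nat_gt ‖g‖
    exact Set.mem_iUnion.mpr ⟨k, g, ⟨_, hΓ.one_mem, by rwa [oscMul_oscOne]⟩, rfl⟩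
  have hW_mono : Monotone fun k => q '' W k := fun k l hkl => Set.image_mono fun g ⟨γ, hγ, h⟩ =>
    ⟨γ, hγ, h.trans_le (by exact_mod_cast hkl)⟩
  have : CompactSpace (Quot (cosetRel lam Γ)) := hΓ.cocompact
  obtain ⟨k, hk⟩ := isCompact_univ.elim_directed_cover _ hW_open hW_cover hW_mono.directed_le
  exact ⟨k, fun g => (hW_sat k ▸ hk (Set.mem_univ (q g)) : g ∈ W k)⟩

end IsLattice

namespace Osc

variable {n : ℕ} {lam : Fin n → ℝ} {Γ : Set (OscG n)}

lemma abs_sympl_le (v w : Fin n → ℝ × ℝ) : |sympl v w| ≤ 2 * n * ‖v‖ * ‖w‖ := by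
  have hterm (i : Fin n) : |(v i).1 * (w i).2 - (v i).2 * (w i).1| ≤ 2 * (‖v‖ * ‖w‖) := by
    have hv₁ : |(v i).1| ≤ ‖v‖ := (norm_fst_le _).trans (norm_le_pi_norm v i)
    have hv₂ : |(v i).2| ≤ ‖v‖ := (norm_snd_le _).trans (norm_le_pi_norm v i)
    have hw₁ : |(w i).1| ≤ ‖w‖ := (norm_fst_le _).trans (norm_le_pi_norm w i)
    have hw₂ : |(w i).2| ≤ ‖w‖ := (norm_snd_le _).trans (norm_le_pi_norm w i)
    calc _ ≤ |(v i).1| * |(w i).2| + |(v i).2| * |(w i).1| := by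
          rw [← abs_mul, ← abs_mul]; exact abs_sub _ _
      _ ≤ ‖v‖ * ‖w‖ + ‖v‖ * ‖w‖ := by gcongr
      _ = 2 * (‖v‖ * ‖w‖) := by ring
  calc |sympl v w| ≤ ∑ i, |(v i).1 * (w i).2 - (v i).2 * (w i).1| := by
        rw [sympl_eq_sum]; exact Finset.abs_sum_le_sum_abs _ _
    _ ≤ ∑ _i : Fin n, 2 * (‖v‖ * ‖w‖) := Finset.sum_le_sum fun i _ => hterm i
    _ = 2 * n * ‖v‖ * ‖w‖ := by
        rw [Finset.sum_const, Finset.card_univ, Fintype.card_fin, nsmul_eq_mul]; ring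

lemma exists_sympl_eq {v : Fin n → ℝ × ℝ} (hv : v ≠ 0) (c : ℝ) : ∃ p, sympl v p = c := by
  set E := ∑ i, ((v i).1 ^ 2 + (v i).2 ^ 2)
  have hE : 0 < E := by
    obtain ⟨i, hi⟩ := Function.ne_iff.mp hv
    refine Finset.sum_pos' (fun j _ => by positivity) ⟨i, Finset.mem_univ _, ?_⟩
    have h : (v i).1 ≠ 0 ∨ (v i).2 ≠ 0 := by
      by_contra! h
      exact hi (Prod.ext h.1 h.2)
    rcases h with h | h <;> positivity
  refine ⟨fun i => (c / E * -(v i).2, c / E * (v i).1), ?_⟩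
  rw [sympl_eq_sum]
  conv_rhs => rw [← div_mul_cancel₀ c hE.ne', Finset.mul_sum]
  exact Finset.sum_congr rfl fun _ _ => by ring

lemma norm_vPart_le (g : OscG n) : ‖g.2.1‖ ≤ ‖g‖ :=
  (norm_fst_le g.2).trans (norm_snd_le g)

lemma dist_oscOne_central (c : ℝ) : dist ((c, 0, 0) : OscG n) (oscOne n) = |c| := by
  simp [oscOne_eq, Prod.dist_eq]

section TrivialRotation

variable (hrot : ∀ γ ∈ Γ, ∀ v, rotV lam γ.2.2 v = v)
include hrot

lemma oscMul_of_mem {γ : OscG n} (hγ : γ ∈ Γ) (δ : OscG n) :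
    oscMul lam γ δ = (γ.1 + δ.1 + 1 / 2 * sympl γ.2.1 δ.2.1, γ.2.1 + δ.2.1, γ.2.2 + δ.2.2) := by
  rw [oscMul_eq, hrot γ hγ]

lemma oscMul_oscInv_of_mem {γ δ : OscG n} (hγ : γ ∈ Γ) (hδ : δ ∈ Γ) :
    oscMul lam γ (oscInv lam δ)
      = (γ.1 - δ.1 - 1 / 2 * sympl γ.2.1 δ.2.1, γ.2.1 - δ.2.1, γ.2.2 - δ.2.2) := by
  rw [oscMul_of_mem hrot hγ, oscInv_eq, rotV_neg_of_forall_eq lam (hrot δ hδ), sympl_neg_right]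
  simp only [sub_eq_add_neg, mul_neg]

lemma commutator_mem (hΓ : IsLattice lam Γ) {γ δ : OscG n} (hγ : γ ∈ Γ) (hδ : δ ∈ Γ) :
    ((sympl γ.2.1 δ.2.1, 0, 0) : OscG n) ∈ Γ := by
  have hγδ := hΓ.mul_mem _ hγ _ hδ
  have hδγ := hΓ.mul_mem _ hδ _ hγ
  have h := hΓ.mul_mem _ hγδ _ (hΓ.inv_mem _ hδγ)
  rw [oscMul_oscInv_of_mem hrot hγδ hδγ, oscMul_of_mem hrot hγ, oscMul_of_mem hrot hδ] at h
  convert h using 2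
  · simp only [sympl_add_left, sympl_add_right, sympl_self, sympl_comm δ.2.1]
    ring
  · simp only [add_comm, sub_self]

lemma exists_pos_eq_of_norm_sub_lt (hΓ : IsLattice lam Γ) :
    ∃ δ > 0, ∀ γ ∈ Γ, ∀ γ' ∈ Γ, ‖γ.2.1 - γ'.2.1‖ < δ → γ.2.1 = γ'.2.1 := by
  obtain ⟨R, hR⟩ := hΓ.exists_norm_oscMul_lt
  obtain ⟨ε, hε, hsep⟩ := hΓ.exists_dist_lt_imp_eq_oscOne
  have hR₀ : 0 < R := by
    obtain ⟨_, _, h⟩ := hR 0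
    exact (norm_nonneg _).trans_lt h
  refine ⟨ε / (4 * n * R + 1), by positivity, fun γ hγ γ' hγ' hlt => ?_⟩
  by_contra hne
  set w := γ.2.1 - γ'.2.1
  have hζ := hΓ.mul_mem _ hγ _ (hΓ.inv_mem _ hγ')
  rw [oscMul_oscInv_of_mem hrot hγ hγ'] at hζ
  obtain ⟨p, hp⟩ := exists_sympl_eq (sub_ne_zero.mpr hne) (ε / 2)
  obtain ⟨ν, hν, hνR⟩ := hR ((0, -p, 0) : OscG n)
  have hνp : ‖ν.2.1 - p‖ < R := by
    refine lt_of_le_of_lt ?_ hνR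
    simpa only [oscMul_eq, rotV_zero, neg_add_eq_sub] using
      norm_vPart_le (oscMul lam ((0, -p, 0) : OscG n) ν)
  have hc := commutator_mem hrot hΓ hζ hν
  set c := sympl w ν.2.1
  have hsmall : |sympl w (ν.2.1 - p)| < ε / 2 := by
    have hw : ‖w‖ * (4 * n * R + 1) < ε := (lt_div_iff₀ (by positivity)).mp hlt
    calc |sympl w (ν.2.1 - p)| ≤ 2 * n * ‖w‖ * ‖ν.2.1 - p‖ := abs_sympl_le _ _
      _ ≤ 2 * n * ‖w‖ * R := by gcongr
      _ < ε / 2 := by nlinarith [norm_nonneg w]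
  have hc_eq : c = ε / 2 + sympl w (ν.2.1 - p) := by rw [sympl_sub_right, hp]; ring
  have hc_pos : 0 < c := by linarith [neg_abs_le (sympl w (ν.2.1 - p))]
  have hc_lt : |c| < ε := by rw [abs_of_pos hc_pos]; linarith [le_abs_self (sympl w (ν.2.1 - p))]
  have := congrArg Prod.fst (hsep _ hc (by rwa [dist_oscOne_central]))
  exact hc_pos.ne' this

end TrivialRotation

lemma ne_of_abs_sub_lt_of_ne {R x y : ℝ} {a b : ℕ} (hab : a ≠ b) (hx : |x - 2 * R * a| < R)
    (hy : |y - 2 * R * b| < R) : x ≠ y := by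
  rintro rfl
  have hR : 0 < R := (abs_nonneg _).trans_lt hx
  have hdist : (1 : ℝ) ≤ |(a : ℝ) - b| := by
    have h : (a : ℤ) - b ≠ 0 := sub_ne_zero.mpr (by exact_mod_cast hab)
    exact_mod_cast Int.one_le_abs h
  rw [abs_lt] at hx hy
  rcases le_abs'.mp hdist with h | h <;> nlinarith

lemma exists_mem_near (hΓ : IsLattice lam Γ) :
    ∃ R, ∀ Z T : ℝ, ∃ γ ∈ Γ, |γ.1 - Z| < R ∧ ‖γ.2.1‖ < 2 * R ∧ |γ.2.2 - T| < R := by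
  obtain ⟨R, hR⟩ := hΓ.exists_norm_oscMul_lt
  refine ⟨R, fun Z T => ?_⟩
  obtain ⟨γ, hγ, hlt⟩ := hR ((-Z, 0, -T) : OscG n)
  simp only [oscMul_eq, sympl_zero_left, zero_add] at hlt
  have hv : γ.2.1 = rotV lam T (rotV lam (-T) γ.2.1) := by
    rw [← rotV_add, add_neg_cancel, rotV_zero]
  refine ⟨γ, hγ, ?_, ?_, ?_⟩
  · simpa only [Real.norm_eq_abs, neg_add_eq_sub, mul_zero, add_zero] using
      (norm_fst_le _).trans_lt hlt
  · calc ‖γ.2.1‖ = ‖rotV lam T (rotV lam (-T) γ.2.1)‖ := congrArg norm hv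
      _ ≤ 2 * ‖rotV lam (-T) γ.2.1‖ := norm_rotV_le lam T _
      _ < 2 * R := by gcongr; exact (norm_fst_le _).trans_lt ((norm_snd_le _).trans_lt hlt)
  · simpa only [Real.norm_eq_abs, neg_add_eq_sub] using
      (norm_snd_le _).trans_lt ((norm_snd_le _).trans_lt hlt)

theorem exists_mem_vPart_eq_zero (hΓ : IsLattice lam Γ)
    (hrot : ∀ γ ∈ Γ, ∀ v, rotV lam γ.2.2 v = v) :
    ∃ γ ∈ Γ, γ.1 ≠ 0 ∧ γ.2.1 = 0 ∧ γ.2.2 ≠ 0 := by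
  obtain ⟨R, hR⟩ := exists_mem_near hΓ
  obtain ⟨δ, hδ, hsep⟩ := exists_pos_eq_of_norm_sub_lt hrot hΓ
  choose γ hγ hz hv ht using fun k : ℕ => hR (2 * R * k) (2 * R * k)
  obtain ⟨x, -, φ, hφ, hlim⟩ := tendsto_subseq_of_bounded (Metric.isBounded_ball (x := 0))
    fun k => mem_ball_zero_iff.mpr (hv k)
  obtain ⟨K, hK⟩ := Metric.tendsto_atTop.mp hlim (δ / 2) (half_pos hδ)
  have hne : φ K ≠ φ (K + 1) := (hφ (Nat.lt_succ_self K)).ne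
  have hv_eq : (γ (φ K)).2.1 = (γ (φ (K + 1))).2.1 := by
    refine hsep _ (hγ _) _ (hγ _) ?_
    rw [← dist_eq_norm]
    calc _ ≤ dist (γ (φ K)).2.1 x + dist x (γ (φ (K + 1))).2.1 := dist_triangle _ _ _
      _ < δ / 2 + δ / 2 := add_lt_add (hK K le_rfl) (dist_comm x _ ▸ hK (K + 1) K.le_succ)
      _ = δ := add_halves δ
  have hζ := hΓ.mul_mem _ (hγ (φ K)) _ (hΓ.inv_mem _ (hγ (φ (K + 1))))
  rw [oscMul_oscInv_of_mem hrot (hγ _) (hγ _), hv_eq, sympl_self, sub_self] at hζ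
  refine ⟨_, hζ, ?_, rfl, ?_⟩
  · simpa only [mul_zero, sub_zero, sub_ne_zero] using
      ne_of_abs_sub_lt_of_ne hne (hz (φ K)) (hz (φ (K + 1)))
  · exact sub_ne_zero.mpr (ne_of_abs_sub_lt_of_ne hne (ht (φ K)) (ht (φ (K + 1))))

lemma rotV_eq_self_of_mem {t₀ : ℝ}
    (hgen : {t : ℝ | ∃ (z : ℝ) (u : Fin n → ℝ × ℝ), (z, u, t) ∈ Γ}
              = {t : ℝ | ∃ m : ℤ, t = m * t₀})
    (hId : ∀ (i : Fin n) (p : ℝ × ℝ), rot (lam i * t₀) p = p) :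
    ∀ γ ∈ Γ, ∀ v, rotV lam γ.2.2 v = v := by
  intro γ hγ v
  obtain ⟨m, hm⟩ : γ.2.2 ∈ {t : ℝ | ∃ m : ℤ, t = m * t₀} := hgen ▸ ⟨γ.1, γ.2.1, hγ⟩
  funext i
  rw [rotV, hm, mul_left_comm]
  exact rot_intCast_mul_eq_self (hId i) m (v i)

end Osc

theorem stmt_7_general {n : ℕ} (lam : Fin n → ℝ)
    (Γ : Set (OscG n)) (hΓ : IsLattice lam Γ)
    (t₀ : ℝ)
    (hgen : {t : ℝ | ∃ (z : ℝ) (u : Fin n → ℝ × ℝ), (z, u, t) ∈ Γ}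
              = {t : ℝ | ∃ m : ℤ, t = m * t₀})
    (hId : ∀ (i : Fin n) (p : ℝ × ℝ), rot (lam i * t₀) p = p) :
    ∃ z t : ℝ, z ≠ 0 ∧ t ≠ 0 ∧
      ((z, (fun _ => (0, 0) : Fin n → ℝ × ℝ), t) : OscG n) ∈ Γ := by
  obtain ⟨⟨z, v, t⟩, hγ, hz, rfl, ht⟩ :=
    Osc.exists_mem_vPart_eq_zero hΓ (Osc.rotV_eq_self_of_mem hgen hId)
  exact ⟨z, t, hz, ht, hγ⟩

/-- If `t₀ > 0` generates the additive subgroup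
`T(Γ) = { t | (z,u,t) ∈ Γ for some z,u }` of `ℝ` and `exp(t₀ N_λ) = Id`
(the case `K₀ = 1`), then `Γ` contains an element `(z,0,t)` with `z ≠ 0` and
`t ≠ 0`. -/
theorem stmt_7 {n : ℕ} (lam : Fin n → ℝ) (hlam : ∀ i, 0 < lam i)
    (Γ : Set (OscG n)) (hΓ : IsLattice lam Γ)
    (t₀ : ℝ) (ht₀ : 0 < t₀)
    (hgen : {t : ℝ | ∃ (z : ℝ) (u : Fin n → ℝ × ℝ), (z, u, t) ∈ Γ}
              = {t : ℝ | ∃ m : ℤ, t = m * t₀})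
    (hId : ∀ (i : Fin n) (p : ℝ × ℝ), rot (lam i * t₀) p = p) :
    ∃ z t : ℝ, z ≠ 0 ∧ t ≠ 0 ∧
      ((z, (fun _ => (0, 0) : Fin n → ℝ × ℝ), t) : OscG n) ∈ Γ :=
  stmt_7_general lam Γ hΓ t₀ hgen hId
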